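/- For every integer m > 1 and every n₀ ∈ ℕ, in the random uniform attachment graph process with degree cap d = 2m, the probability that every vertex of {1,…,n₀} has degree exactly d in G_n tends to 1 as n → ∞. -/

import Mathlib

open Finset MeasureTheory Filter Topology FirstOrder
open scoped ENNReal

noncomputable section

open scoped Classical

/-- The degree of vertex `v` in the graph `g`, counting neighbors among `{1, …, n}`. -/
def degIn (g : SimpleGraph ℕ) (n v : ℕ) : ℕ :=
  ((Finset.Icc 1 n).filter fun u => g.Adj v u).card

/-- The set of neighbors of vertex `v` in the graph `g` among `{1, …, n}`. -/
def nbrsIn (g : SimpleGraph ℕ) (n v : ℕ) : Finset ℕ :=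
  (Finset.Icc 1 n).filter fun u => g.Adj v u

/-- `g'` is obtained from `g` (a graph on `{1,…,n}`) by one admissible uniform-attachment
step with parameter `m` and degree cap `d = 2m`: the new vertex `n+1` is joined to `m`
distinct vertices of `{1,…,n}`, each of degree `< 2m` in `g`; adjacencies among the other
vertices are unchanged, and all edges of `g'` stay inside `{1,…,n+1}`. -/
def IsUAStep (m n : ℕ) (g g' : SimpleGraph ℕ) : Prop :=
  (∀ u v, g'.Adj u v → u ∈ Finset.Icc 1 (n+1) ∧ v ∈ Finset.Icc 1 (n+1)) ∧
  (∀ u v, u ≠ n+1 → v ≠ n+1 → (g'.Adj u v ↔ g.Adj u v)) ∧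
  (nbrsIn g' (n+1) (n+1)).card = m ∧
  (∀ u, g'.Adj (n+1) u → u ∈ Finset.Icc 1 n ∧ degIn g n u < 2*m)

/-- The complete graph on the vertex set `{1, …, k}` (as a graph on `ℕ`). -/
def completeOn (k : ℕ) : SimpleGraph ℕ :=
  SimpleGraph.fromRel (fun u v => u ∈ Finset.Icc 1 k ∧ v ∈ Finset.Icc 1 k)

/-- `N(g)`: the number of `m`-element sets of vertices of degree `< 2m` of a graph `g`
on `{1,…,n}`. -/
def numOpenSets (m n : ℕ) (g : SimpleGraph ℕ) : ℕ :=
  (((Finset.Icc 1 n).filter fun v => degIn g n v < 2*m).card).choose m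

/-- The random uniform attachment graph process with parameter `m` (degree cap `d = 2m`),
modeled by random variables `G n` (for `n ≥ m+1`) on a probability space `(Ω, P)` taking
values in simple graphs on `{1,…,n}`: `G (m+1)` is a.s. the complete graph on `{1,…,m+1}`;
a.s. each `G (n+1)` is obtained from `G n` by an admissible uniform attachment step; and
for every graph `g` on `{1,…,n}` and every `m`-element set `S` of vertices of degree `< 2m`
of `g`, `P(G n = g and the neighborhood of n+1 in G (n+1) equals S) = P(G n = g) / N(g)`. -/
structure UAProcess (m : ℕ) {Ω : Type} [MeasurableSpace Ω] (P : Measure Ω) where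
  G : ℕ → Ω → SimpleGraph ℕ
  meas : ∀ n H, MeasurableSet {ω | G n ω = H}
  init : P {ω | G (m+1) ω = completeOn (m+1)} = 1
  stepAdm : ∀ n, m+1 ≤ n → P {ω | IsUAStep m n (G n ω) (G (n+1) ω)} = 1
  stepUnif : ∀ n, m+1 ≤ n → ∀ g : SimpleGraph ℕ,
    (∀ u v, g.Adj u v → u ∈ Finset.Icc 1 n ∧ v ∈ Finset.Icc 1 n) →
    ∀ S : Finset ℕ, S.card = m →
    (∀ v ∈ S, v ∈ Finset.Icc 1 n ∧ degIn g n v < 2*m) →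
    P {ω | G n ω = g ∧ nbrsIn (G (n+1) ω) (n+1) (n+1) = S} =
      P {ω | G n ω = g} / (numOpenSets m n g : ℝ≥0∞)

/-! Call `2m - deg v` the deficiency of `v`. Each step adds a vertex of deficiency `m` and takes
one unit from each of `m` open vertices, so the total deficiency stays `m(m+1)`: there are at
most `m(m+1)` open vertices, and a given open vertex is chosen by the next one with probability at
least `1/(m+1)`. Hence the expected deficiency of `{1,…,n₀}` drops at every step by at least
`1/(m+1)` times the probability that one of these vertices is still open; as it starts finite,
these probabilities are summable and tend to `0`.

Only the events `{G n = g}` are known to be measurable, so expectations are finite sums over the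
graphs satisfying the invariants, which carry `G n` almost surely. -/

def SupportedOn (n : ℕ) (g : SimpleGraph ℕ) : Prop :=
  ∀ u v, g.Adj u v → u ∈ Finset.Icc 1 n ∧ v ∈ Finset.Icc 1 n

def openVerts (m n : ℕ) (g : SimpleGraph ℕ) : Finset ℕ :=
  (Finset.Icc 1 n).filter fun v => degIn g n v < 2*m

def localDeficiency (m n₀ n : ℕ) (g : SimpleGraph ℕ) : ℕ :=
  ∑ v ∈ Finset.Icc 1 n₀, (2*m - degIn g n v)

def InitialSegmentClosed (m n₀ n : ℕ) (g : SimpleGraph ℕ) : Prop :=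
  ∀ v ∈ Finset.Icc 1 n₀, degIn g n v = 2*m

structure UAInvariant (m n : ℕ) (g : SimpleGraph ℕ) : Prop where
  supportedOn : SupportedOn n g
  degIn_mem : ∀ v ∈ Finset.Icc 1 n, m ≤ degIn g n v ∧ degIn g n v ≤ 2*m
  localDeficiency_eq : localDeficiency m n n g = m*(m+1)

lemma degIn_succ (g : SimpleGraph ℕ) (n v : ℕ) :
    degIn g (n+1) v = degIn g n v + if g.Adj v (n+1) then 1 else 0 := by
  rw [degIn, degIn, ← Finset.insert_Icc_right_eq_Icc_add_one (by omega), Finset.filter_insert]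
  split_ifs
  · exact Finset.card_insert_of_notMem (by simp)
  · rfl

lemma degIn_succ_self (g : SimpleGraph ℕ) (n : ℕ) : degIn g (n+1) (n+1) = degIn g n (n+1) := by
  simp [degIn_succ]

namespace IsUAStep

variable {m n : ℕ} {g g' : SimpleGraph ℕ}

lemma degIn_eq (h : IsUAStep m n g g') {v : ℕ} (hv : v ≠ n+1) :
    degIn g' n v = degIn g n v := by
  refine congrArg Finset.card (Finset.filter_congr fun u hu => h.2.1 v u hv ?_)
  simp only [Finset.mem_Icc] at hu
  omega

lemma degIn_new (h : IsUAStep m n g g') : degIn g' n (n+1) = m := by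
  rw [← degIn_succ_self]
  exact h.2.2.1

lemma degIn_succ_eq (h : IsUAStep m n g g') {v : ℕ} (hv : v ≠ n+1) :
    degIn g' (n+1) v = degIn g n v + if g'.Adj (n+1) v then 1 else 0 := by
  rw [degIn_succ, h.degIn_eq hv, g'.adj_comm]

lemma localDeficiency_add_degIn {n₀ : ℕ} (h : IsUAStep m n g g') (hn₀ : n₀ ≤ n) :
    localDeficiency m n₀ (n+1) g' + degIn g' n₀ (n+1) = localDeficiency m n₀ n g := by
  rw [localDeficiency, localDeficiency, degIn, Finset.card_filter, ← Finset.sum_add_distrib]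
  refine Finset.sum_congr rfl fun v hv => ?_
  have hv' : v ≠ n+1 := by simp only [Finset.mem_Icc] at hv; omega
  rw [h.degIn_succ_eq hv']
  split_ifs with hadj
  · have := (h.2.2.2 v hadj).2
    omega
  · omega

lemma uaInvariant (h : IsUAStep m n g g') (hg : UAInvariant m n g) :
    UAInvariant m (n+1) g' where
  supportedOn := h.1
  degIn_mem v hv := by
    by_cases hvn : v = n+1
    · rw [hvn, degIn_succ_self, h.degIn_new]
      omega
    · have hv' : v ∈ Finset.Icc 1 n := by simp only [Finset.mem_Icc] at hv ⊢; omega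
      have := hg.degIn_mem v hv'
      rw [h.degIn_succ_eq hvn]
      split_ifs with hadj
      · have := (h.2.2.2 v hadj).2
        omega
      · omega
  localDeficiency_eq := by
    have hsplit := h.localDeficiency_add_degIn le_rfl
    rw [h.degIn_new, hg.localDeficiency_eq, localDeficiency] at hsplit
    rw [localDeficiency, ← Finset.insert_Icc_right_eq_Icc_add_one (by omega),
      Finset.sum_insert (by simp), degIn_succ_self, h.degIn_new]
    omega

end IsUAStep

lemma degIn_completeOn {k v : ℕ} (hv : v ∈ Finset.Icc 1 k) :
    degIn (completeOn k) k v = k - 1 := by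
  have : (Finset.Icc 1 k).filter (fun u => (completeOn k).Adj v u) = (Finset.Icc 1 k).erase v := by
    ext u
    simp only [completeOn, SimpleGraph.fromRel_adj, Finset.mem_filter, Finset.mem_erase]
    constructor
    · rintro ⟨hu, hne, -⟩
      exact ⟨Ne.symm hne, hu⟩
    · rintro ⟨hne, hu⟩
      exact ⟨hu, Ne.symm hne, Or.inl ⟨hv, hu⟩⟩
  rw [degIn, this, Finset.card_erase_of_mem hv, Nat.card_Icc, Nat.add_sub_cancel]

lemma uaInvariant_completeOn (m : ℕ) : UAInvariant m (m+1) (completeOn (m+1)) where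
  supportedOn u v h := by
    simp only [completeOn, SimpleGraph.fromRel_adj] at h
    tauto
  degIn_mem v hv := by
    rw [degIn_completeOn hv]
    omega
  localDeficiency_eq := by
    rw [localDeficiency, Finset.sum_congr rfl fun v hv => by rw [degIn_completeOn hv],
      Finset.sum_const, Nat.card_Icc, smul_eq_mul, Nat.add_sub_cancel, Nat.add_sub_cancel,
      show 2*m - m = m by omega, mul_comm]

/-- Only open vertices carry deficiency, each at least `1` and at most `m`. -/
lemma UAInvariant.card_openVerts_mem {m n : ℕ} {g : SimpleGraph ℕ} (h : UAInvariant m n g) :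
    m ≤ (openVerts m n g).card ∧ (openVerts m n g).card ≤ m*(m+1) := by
  have hsum : ∑ v ∈ openVerts m n g, (2*m - degIn g n v) = m*(m+1) := by
    rw [← h.localDeficiency_eq, localDeficiency, openVerts]
    exact Finset.sum_filter_of_ne fun v _ hne => by omega
  have hle := Finset.sum_le_card_nsmul (openVerts m n g) (fun v => 2*m - degIn g n v) m
    fun v hv => by
      have := (h.degIn_mem v (Finset.mem_filter.mp hv).1).1
      omega
  have hge := Finset.card_nsmul_le_sum (openVerts m n g) (fun v => 2*m - degIn g n v) 1
    fun v hv => by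
      have := (Finset.mem_filter.mp hv).2
      omega
  rw [hsum, smul_eq_mul] at hle
  rw [hsum, smul_eq_mul, mul_one] at hge
  exact ⟨by nlinarith, hge⟩

lemma choose_le_succ_mul_choose_sub_one {K k : ℕ} (hK : 0 < K) (hk : 0 < k)
    (hKk : K ≤ k*(k+1)) : K.choose k ≤ (k+1) * (K-1).choose (k-1) := by
  have hpascal := Nat.add_one_mul_choose_eq (K-1) (k-1)
  rw [Nat.sub_add_cancel hK, Nat.sub_add_cancel hk] at hpascal
  refine Nat.le_of_mul_le_mul_right ?_ hk
  rw [← hpascal, mul_right_comm]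
  exact Nat.mul_le_mul_right _ (by rwa [mul_comm])

lemma choose_sub_one_le_card_filter_mem_powersetCard {α : Type*} [DecidableEq α] {U : Finset α}
    {a : α} (ha : a ∈ U) {k : ℕ} (hk : 0 < k) :
    (U.card - 1).choose (k-1) ≤ ((U.powersetCard k).filter (a ∈ ·)).card := by
  have hnotMem : ∀ S ∈ (U.erase a).powersetCard (k-1), a ∉ S := fun S hS h => by
    simpa using (Finset.mem_powersetCard.mp hS).1 h
  rw [← Finset.card_erase_of_mem ha, ← Finset.card_powersetCard]
  refine Finset.card_le_card_of_injOn (insert a) (fun S hS => ?_)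
    fun S₁ hS₁ S₂ hS₂ heq => ?_
  · obtain ⟨hsub, hcard⟩ := Finset.mem_powersetCard.mp hS
    simp only [Finset.coe_filter, Set.mem_ofPred_eq, Finset.mem_powersetCard,
      Finset.mem_insert_self, and_true]
    refine ⟨Finset.insert_subset ha (hsub.trans (Finset.erase_subset a U)), ?_⟩
    rw [Finset.card_insert_of_notMem (hnotMem S hS), hcard, Nat.sub_add_cancel hk]
  · rw [← Finset.erase_insert (hnotMem S₁ hS₁), ← Finset.erase_insert (hnotMem S₂ hS₂),
      heq]

lemma ENNReal.div_add_one_le_mul_div (p : ℝ≥0∞) {N c k : ℕ} (hN : N ≠ 0)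
    (h : N ≤ (k+1) * c) : p / (k+1) ≤ c * (p / N) := by
  rw [ENNReal.div_le_iff_le_mul (Or.inl (by positivity)) (Or.inl (by simp))]
  calc p = p / N * N := (ENNReal.div_mul_cancel (by simpa) (ENNReal.natCast_ne_top _)).symm
    _ ≤ p / N * ((k+1) * c : ℕ) := by gcongr
    _ = c * (p / N) * (k+1) := by
        push_cast
        ring

lemma tendsto_atTop_zero_of_add_le {F q : ℕ → ℝ≥0∞} (hF : F 0 ≠ ⊤)
    (h : ∀ n, F (n+1) + q n ≤ F n) : Tendsto q atTop (𝓝 0) := by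
  have htele : ∀ t, ∑ i ∈ Finset.range t, q i + F t ≤ F 0 := by
    intro t
    induction t with
    | zero => simp
    | succ t ih =>
      calc ∑ i ∈ Finset.range (t+1), q i + F (t+1)
          = ∑ i ∈ Finset.range t, q i + (F (t+1) + q t) := by rw [Finset.sum_range_succ]; ring
        _ ≤ F 0 := le_trans (by gcongr; exact h t) ih
  refine ENNReal.tendsto_atTop_zero_of_tsum_ne_top (ne_top_of_le_ne_top hF ?_)
  exact ENNReal.tsum_le_of_sum_range_le fun t => le_trans le_self_add (htele t)

section FiniteSupport

variable {Ω β : Type*} [MeasurableSpace Ω] {Y : Ω → β}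

lemma measurableSet_preimage_finset (hY : ∀ y, MeasurableSet (Y ⁻¹' {y})) (A : Finset β) :
    MeasurableSet (Y ⁻¹' A) := by
  rw [← Set.biUnion_preimage_singleton]
  exact Finset.measurableSet_biUnion A fun y _ => hY y

lemma sum_measure_preimage_singleton_inter {μ : Measure Ω} {A : Finset β}
    (hY : ∀ y, MeasurableSet (Y ⁻¹' {y})) (hA : ∀ᵐ ω ∂μ, Y ω ∈ A) (B : Set Ω) :
    ∑ y ∈ A, μ (Y ⁻¹' {y} ∩ B) = μ B := by
  simp_rw [← Measure.restrict_apply (hY _)]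
  rw [sum_measure_preimage_singleton A fun y _ => hY y,
    Measure.restrict_apply (measurableSet_preimage_finset hY A)]
  exact Measure.measure_inter_eq_of_ae hA

end FiniteSupport

def graphsOn (n : ℕ) : Finset (SimpleGraph ℕ) :=
  (Finset.Icc 1 n ×ˢ Finset.Icc 1 n).powerset.image
    fun E => SimpleGraph.fromRel fun u v => (u, v) ∈ E

lemma mem_graphsOn_of_supportedOn {n : ℕ} {g : SimpleGraph ℕ} (hg : SupportedOn n g) :
    g ∈ graphsOn n := by
  refine Finset.mem_image.mpr ⟨(Finset.Icc 1 n ×ˢ Finset.Icc 1 n).filter fun e => g.Adj e.1 e.2,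
    Finset.mem_powerset.mpr (Finset.filter_subset _ _), ?_⟩
  ext u v
  simp only [SimpleGraph.fromRel_adj, Finset.mem_filter, Finset.mem_product, g.adj_comm v u]
  constructor
  · rintro ⟨-, ⟨-, h⟩ | ⟨-, h⟩⟩ <;> exact h
  · exact fun h => ⟨g.ne_of_adj h, Or.inl ⟨hg u v h, h⟩⟩

def invariantGraphs (m n : ℕ) : Finset (SimpleGraph ℕ) :=
  (graphsOn n).filter (UAInvariant m n)

lemma mem_invariantGraphs {m n : ℕ} {g : SimpleGraph ℕ} :
    g ∈ invariantGraphs m n ↔ UAInvariant m n g :=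
  ⟨fun h => (Finset.mem_filter.mp h).2,
    fun h => Finset.mem_filter.mpr ⟨mem_graphsOn_of_supportedOn h.1, h⟩⟩

namespace UAProcess

variable {m : ℕ} {Ω : Type} [MeasurableSpace Ω] {P : Measure Ω} (X : UAProcess m P)

def jointProb (n : ℕ) (g g' : SimpleGraph ℕ) : ℝ≥0∞ :=
  P (X.G n ⁻¹' {g} ∩ X.G (n+1) ⁻¹' {g'})

def meanLocalDeficiency (n₀ n : ℕ) : ℝ≥0∞ :=
  ∑ g ∈ invariantGraphs m n, P (X.G n ⁻¹' {g}) * localDeficiency m n₀ n g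

def probNotClosed (n₀ n : ℕ) : ℝ≥0∞ :=
  ∑ g ∈ (invariantGraphs m n).filter (¬ InitialSegmentClosed m n₀ n ·), P (X.G n ⁻¹' {g})

lemma measurableSet_preimage (n : ℕ) (g : SimpleGraph ℕ) : MeasurableSet (X.G n ⁻¹' {g}) :=
  X.meas n g

variable [IsProbabilityMeasure P] {n : ℕ}

/-- The admissibility event need not be measurable, so `stepAdm` does not give `∀ᵐ`. -/
lemma measure_isUAStep_inter (hn : m+1 ≤ n) {s : Set Ω} (hs : MeasurableSet s) :
    P ({ω | IsUAStep m n (X.G n ω) (X.G (n+1) ω)} ∩ s) = P s := by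
  rw [Measure.measure_inter_eq_of_measure_eq hs (by rw [X.stepAdm n hn, measure_univ])
    (Set.subset_univ _) (measure_ne_top P _), Set.univ_inter]

lemma isUAStep_of_jointProb_ne_zero (hn : m+1 ≤ n) {g g' : SimpleGraph ℕ}
    (h : X.jointProb n g g' ≠ 0) : IsUAStep m n g g' := by
  rw [jointProb, ← X.measure_isUAStep_inter hn
    ((X.measurableSet_preimage n g).inter (X.measurableSet_preimage (n+1) g'))] at h
  obtain ⟨ω, hstep, rfl, rfl⟩ := nonempty_of_measure_ne_zero h
  exact hstep

lemma ae_mem_invariantGraphs (hn : m+1 ≤ n) :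
    ∀ᵐ ω ∂P, X.G n ω ∈ invariantGraphs m n := by
  induction n, hn using Nat.le_induction with
  | base =>
    have hinit : ∀ᵐ ω ∂P, X.G (m+1) ω = completeOn (m+1) :=
      (ae_mem_iff_measure_eq (X.measurableSet_preimage _ _).nullMeasurableSet).mpr
        (by rw [measure_univ]; exact X.init)
    filter_upwards [hinit] with ω hω
    rw [hω, mem_invariantGraphs]
    exact uaInvariant_completeOn m
  | succ n hn ih =>
    have hmeas := measurableSet_preimage_finset (X.measurableSet_preimage n) (invariantGraphs m n)
    refine (ae_mem_iff_measure_eq (measurableSet_preimage_finset (X.measurableSet_preimage (n+1))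
      _).nullMeasurableSet).mpr (le_antisymm (measure_mono (Set.subset_univ _)) ?_)
    calc P Set.univ = P (X.G n ⁻¹' invariantGraphs m n) :=
          ((ae_mem_iff_measure_eq hmeas.nullMeasurableSet).mp ih).symm
      _ = P ({ω | IsUAStep m n (X.G n ω) (X.G (n+1) ω)} ∩ X.G n ⁻¹' invariantGraphs m n) :=
          (X.measure_isUAStep_inter hn hmeas).symm
      _ ≤ P (X.G (n+1) ⁻¹' invariantGraphs m (n+1)) := measure_mono fun ω ⟨hstep, hmem⟩ =>
          mem_invariantGraphs.mpr (hstep.uaInvariant (mem_invariantGraphs.mp hmem))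

lemma sum_jointProb_left (hn : m+1 ≤ n) (g' : SimpleGraph ℕ) :
    ∑ g ∈ invariantGraphs m n, X.jointProb n g g' = P (X.G (n+1) ⁻¹' {g'}) :=
  sum_measure_preimage_singleton_inter (X.measurableSet_preimage n) (X.ae_mem_invariantGraphs hn) _

lemma sum_jointProb_right (hn : m+1 ≤ n) (g : SimpleGraph ℕ) :
    ∑ g' ∈ invariantGraphs m (n+1), X.jointProb n g g' = P (X.G n ⁻¹' {g}) := by
  simp_rw [jointProb, Set.inter_comm (X.G n ⁻¹' {g})]
  exact sum_measure_preimage_singleton_inter (X.measurableSet_preimage (n+1))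
    (X.ae_mem_invariantGraphs (by omega)) _

lemma measure_nbrsIn_eq_le_sum_jointProb (hn : m+1 ≤ n) (g : SimpleGraph ℕ) (S : Finset ℕ) :
    P {ω | X.G n ω = g ∧ nbrsIn (X.G (n+1) ω) (n+1) (n+1) = S} ≤
      ∑ g' ∈ invariantGraphs m (n+1),
        if nbrsIn g' (n+1) (n+1) = S then X.jointProb n g g' else 0 := by
  rw [← sum_measure_preimage_singleton_inter (X.measurableSet_preimage (n+1))
    (X.ae_mem_invariantGraphs (by omega))]
  refine Finset.sum_le_sum fun g' _ => ?_
  split_ifs with hS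
  · exact measure_mono fun ω ⟨hω', hω, _⟩ => ⟨hω, hω'⟩
  · have hempty : X.G (n+1) ⁻¹' {g'} ∩
        {ω | X.G n ω = g ∧ nbrsIn (X.G (n+1) ω) (n+1) (n+1) = S} = ∅ := by
      refine Set.eq_empty_of_forall_notMem fun ω ⟨hω', _, hωS⟩ => hS ?_
      rwa [Set.mem_singleton_iff.mp hω'] at hωS
    rw [hempty, measure_empty]

/-- The open vertex `v₀` is chosen with conditional probability `C(K-1, m-1) / C(K, m) = m / K`,
where `K ≤ m(m+1)` is the number of open vertices. -/
lemma div_le_sum_jointProb_mul_degIn (hn : m+1 ≤ n) {n₀ : ℕ} {g : SimpleGraph ℕ}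
    (hg : g ∈ invariantGraphs m n) {v₀ : ℕ} (hv₀ : v₀ ∈ Finset.Icc 1 n₀)
    (hopen : v₀ ∈ openVerts m n g) :
    P (X.G n ⁻¹' {g}) / (m+1) ≤
      ∑ g' ∈ invariantGraphs m (n+1), X.jointProb n g g' * degIn g' n₀ (n+1) := by
  set T := ((openVerts m n g).powersetCard m).filter (v₀ ∈ ·)
  have hinv := mem_invariantGraphs.mp hg
  have hm : 0 < m := by have := (Finset.mem_filter.mp hopen).2; omega
  obtain ⟨hK₁, hK₂⟩ := hinv.card_openVerts_mem
  have hN : numOpenSets m n g ≤ (m+1) * T.card :=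
    (choose_le_succ_mul_choose_sub_one (Finset.card_pos.mpr ⟨v₀, hopen⟩) hm hK₂).trans
      (Nat.mul_le_mul_left _ (choose_sub_one_le_card_filter_mem_powersetCard hopen hm))
  calc P (X.G n ⁻¹' {g}) / (m+1)
      ≤ T.card * (P (X.G n ⁻¹' {g}) / numOpenSets m n g) :=
        ENNReal.div_add_one_le_mul_div _ (Nat.choose_pos hK₁).ne' hN
    _ = ∑ S ∈ T, P {ω | X.G n ω = g ∧ nbrsIn (X.G (n+1) ω) (n+1) (n+1) = S} := by
        rw [Finset.sum_congr rfl fun S hS => ?_, Finset.sum_const, nsmul_eq_mul]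
        obtain ⟨hsub, hcard⟩ := Finset.mem_powersetCard.mp (Finset.mem_filter.mp hS).1
        exact X.stepUnif n hn g hinv.supportedOn S hcard fun v hv =>
          Finset.mem_filter.mp (hsub hv)
    _ ≤ ∑ S ∈ T, ∑ g' ∈ invariantGraphs m (n+1),
          if nbrsIn g' (n+1) (n+1) = S then X.jointProb n g g' else 0 :=
        Finset.sum_le_sum fun S _ => X.measure_nbrsIn_eq_le_sum_jointProb hn g S
    _ = ∑ g' ∈ invariantGraphs m (n+1),
          if nbrsIn g' (n+1) (n+1) ∈ T then X.jointProb n g g' else 0 := by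
        rw [Finset.sum_comm]
        simp_rw [Finset.sum_ite_eq]
    _ ≤ ∑ g' ∈ invariantGraphs m (n+1), X.jointProb n g g' * degIn g' n₀ (n+1) := by
        refine Finset.sum_le_sum fun g' _ => ?_
        split_ifs with hT
        · have hadj := (Finset.mem_filter.mp ((Finset.mem_filter.mp hT).2)).2
          have : 1 ≤ degIn g' n₀ (n+1) :=
            Finset.card_pos.mpr ⟨v₀, Finset.mem_filter.mpr ⟨hv₀, hadj⟩⟩
          calc X.jointProb n g g' = X.jointProb n g g' * (1 : ℕ) := by simp
            _ ≤ _ := by gcongr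
        · exact zero_le

lemma probNotClosed_div_le (hn : m+1 ≤ n) {n₀ : ℕ} (hn₀ : n₀ ≤ n) :
    X.probNotClosed n₀ n / (m+1) ≤ ∑ g ∈ invariantGraphs m n,
      ∑ g' ∈ invariantGraphs m (n+1), X.jointProb n g g' * degIn g' n₀ (n+1) := by
  rw [probNotClosed, div_eq_mul_inv, Finset.sum_mul]
  refine (Finset.sum_le_sum fun g hg => ?_).trans
    (Finset.sum_le_sum_of_subset (Finset.filter_subset _ _))
  obtain ⟨hg, hnotClosed⟩ := Finset.mem_filter.mp hg
  obtain ⟨v, hv, hdeg⟩ := not_forall₂.mp hnotClosed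
  have hvn : v ∈ Finset.Icc 1 n := Finset.Icc_subset_Icc_right hn₀ hv
  have := ((mem_invariantGraphs.mp hg).degIn_mem v hvn).2
  rw [← div_eq_mul_inv]
  exact X.div_le_sum_jointProb_mul_degIn hn hg hv (Finset.mem_filter.mpr ⟨hvn, by omega⟩)

lemma meanLocalDeficiency_ne_top (n₀ n : ℕ) : X.meanLocalDeficiency n₀ n ≠ ⊤ :=
  ENNReal.sum_ne_top.mpr fun _ _ => ENNReal.mul_ne_top (measure_ne_top P _)
    (ENNReal.natCast_ne_top _)

lemma meanLocalDeficiency_succ_add_le (hn : m+1 ≤ n) {n₀ : ℕ} (hn₀ : n₀ ≤ n) :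
    X.meanLocalDeficiency n₀ (n+1) + X.probNotClosed n₀ n / (m+1) ≤
      X.meanLocalDeficiency n₀ n := by
  have hnext : X.meanLocalDeficiency n₀ (n+1) = ∑ g ∈ invariantGraphs m n,
      ∑ g' ∈ invariantGraphs m (n+1), X.jointProb n g g' * localDeficiency m n₀ (n+1) g' := by
    rw [meanLocalDeficiency, Finset.sum_comm]
    simp_rw [← Finset.sum_mul, X.sum_jointProb_left hn]
  have hnow : X.meanLocalDeficiency n₀ n = ∑ g ∈ invariantGraphs m n,
      ∑ g' ∈ invariantGraphs m (n+1), X.jointProb n g g' * localDeficiency m n₀ n g := by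
    simp_rw [meanLocalDeficiency, ← Finset.sum_mul, X.sum_jointProb_right hn]
  rw [hnext, hnow]
  refine (add_le_add_right (X.probNotClosed_div_le hn hn₀) _).trans_eq ?_
  rw [← Finset.sum_add_distrib]
  refine Finset.sum_congr rfl fun g _ => ?_
  rw [← Finset.sum_add_distrib]
  refine Finset.sum_congr rfl fun g' _ => ?_
  by_cases hJ : X.jointProb n g g' = 0
  · simp [hJ]
  · rw [← mul_add, ← Nat.cast_add,
      (X.isUAStep_of_jointProb_ne_zero hn hJ).localDeficiency_add_degIn hn₀]

lemma one_sub_probNotClosed_le (hn : m+1 ≤ n) (n₀ : ℕ) :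
    1 - X.probNotClosed n₀ n ≤ P {ω | InitialSegmentClosed m n₀ n (X.G n ω)} := by
  have htotal := sum_measure_preimage_singleton_inter (X.measurableSet_preimage n)
    (X.ae_mem_invariantGraphs hn) Set.univ
  simp_rw [Set.inter_univ, measure_univ] at htotal
  rw [← Finset.sum_filter_add_sum_filter_not _ (InitialSegmentClosed m n₀ n)] at htotal
  rw [tsub_le_iff_right, probNotClosed, ← htotal]
  gcongr
  rw [sum_measure_preimage_singleton _ fun g _ => X.measurableSet_preimage n g]
  exact measure_mono fun ω hω => (Finset.mem_filter.mp hω).2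

end UAProcess

theorem uniform_attachment_initial_segment_closed_general
    (m : ℕ) (n₀ : ℕ)
    {Ω : Type} [MeasurableSpace Ω] (P : Measure Ω) [IsProbabilityMeasure P]
    (X : UAProcess m P) :
    Tendsto (fun n => P {ω | ∀ v ∈ Finset.Icc 1 n₀, degIn (X.G n ω) n v = 2*m})
      atTop (𝓝 1) := by
  set N := n₀ + (m+1)
  have hdecay : Tendsto (fun k => X.probNotClosed n₀ (k + N) / (m+1)) atTop (𝓝 0) :=
    tendsto_atTop_zero_of_add_le (F := fun k => X.meanLocalDeficiency n₀ (k + N))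
      (X.meanLocalDeficiency_ne_top n₀ _) fun k => by
        rw [Nat.add_right_comm]
        exact X.meanLocalDeficiency_succ_add_le (by omega) (by omega)
  have hnotClosed : Tendsto (fun k => X.probNotClosed n₀ (k + N)) atTop (𝓝 0) := by
    have h := ENNReal.Tendsto.mul_const hdecay (b := (m : ℝ≥0∞) + 1) (Or.inr (by simp))
    rw [zero_mul] at h
    exact h.congr fun k => ENNReal.div_mul_cancel (by positivity) (by simp)
  refine (tendsto_add_atTop_iff_nat N).mp (tendsto_of_tendsto_of_tendsto_of_le_of_le ?_
    tendsto_const_nhds (fun k => X.one_sub_probNotClosed_le (by omega) n₀) fun _ => prob_le_one)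
  simpa using ENNReal.Tendsto.sub tendsto_const_nhds hnotClosed (Or.inl ENNReal.one_ne_top)

/-- For every integer `m > 1` and every `n₀ ∈ ℕ`, in the random uniform
attachment graph process with degree cap `d = 2m`, the probability that every vertex of
`{1,…,n₀}` has degree exactly `2m` in `G n` tends to `1` as `n → ∞`. -/
theorem uniform_attachment_initial_segment_closed
    (m : ℕ) (hm : 1 < m) (n₀ : ℕ)
    {Ω : Type} [MeasurableSpace Ω] (P : Measure Ω) [IsProbabilityMeasure P]
    (X : UAProcess m P) :
    Tendsto (fun n => P {ω | ∀ v ∈ Finset.Icc 1 n₀, degIn (X.G n ω) n v = 2*m})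
      atTop (𝓝 1) :=
  uniform_attachment_initial_segment_closed_general m n₀ P X
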